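/- In the concrete Weyl representation on ℓ²(S), let Ω ∈ ℓ²(S) be the indicator sequence of 0 (Ω_φ = δ_{φ,0}). If φ ≠ φ' in S, then W(φ)Ω and W(φ')Ω are orthogonal unit vectors, and consequently the operator norm ‖W(φ) − W(φ')‖ = 2. -/

import Mathlib

/-!
Each `W φ` is a weighted shift of `ℓ²(S)` by `φ` with unimodular weights, hence an isometry,
and `W φ Ω` is a unimodular multiple of the basis vector `b_{-φ}` (`b_ψ = lp.single 2 ψ 1`).
This gives orthonormality and `‖W φ - W φ'‖ ≤ 2`. For the reverse bound, `δ = φ' - φ` has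
infinite order, and unimodular coefficients `c m` can be chosen so that
`W φ (c m • b_{m δ}) = -W φ' (c (m+1) • b_{(m+1) δ})`. Then `x = ∑_{m ≤ N} c m • b_{m δ}` has
`‖x‖² = N + 1` while `(W φ' - W φ) x` is the sum of two overlapping runs of the orthonormal
vectors `W φ' (c m • b_{m δ})`, of squared norm `4N + 2`.
-/

open Finset

namespace Orthonormal

variable {𝕜 E ι : Type*} [RCLike 𝕜] [NormedAddCommGroup E] [InnerProductSpace 𝕜 E]
  [DecidableEq ι] {w : ι → E}

theorem inner_sum_sum_eq_card_inter (hw : Orthonormal 𝕜 w) (s t : Finset ι) :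
    inner 𝕜 (∑ i ∈ s, w i) (∑ j ∈ t, w j) = #(s ∩ t) := by
  simp_rw [sum_inner, inner_sum, orthonormal_iff_ite.mp hw, sum_ite_eq, sum_boole,
    filter_mem_eq_inter]

theorem norm_sum_sq (hw : Orthonormal 𝕜 w) (s : Finset ι) : ‖∑ i ∈ s, w i‖ ^ 2 = #s := by
  rw [@norm_sq_eq_re_inner 𝕜, hw.inner_sum_sum_eq_card_inter, inter_self]
  simp

theorem norm_sum_add_sum_sq (hw : Orthonormal 𝕜 w) (s t : Finset ι) :
    ‖∑ i ∈ s, w i + ∑ j ∈ t, w j‖ ^ 2 = #s + #t + 2 * #(s ∩ t) := by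
  rw [@norm_add_sq 𝕜, hw.norm_sum_sq, hw.norm_sum_sq, hw.inner_sum_sum_eq_card_inter]
  simp only [RCLike.natCast_re]
  ring

end Orthonormal

theorem two_le_of_forall_four_mul_add_two_le {C : ℝ} (h : ∀ N : ℕ, 4 * N + 2 ≤ C ^ 2 * (N + 1)) (hC : 0 ≤ C) :
    2 ≤ C := by
  by_contra! hlt
  obtain ⟨N, hN⟩ := exists_nat_gt (2 / (4 - C ^ 2))
  have hpos : 0 < 4 - C ^ 2 := by nlinarith
  rw [div_lt_iff₀ hpos] at hN
  nlinarith [h N]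

theorem ContinuousLinearMap.two_le_norm_sub_of_orthonormal {𝕜 E : Type*} [RCLike 𝕜]
    [NormedAddCommGroup E] [InnerProductSpace 𝕜 E] (A B : E →L[𝕜] E) {u : ℕ → E}
    (hu : Orthonormal 𝕜 u) (hBu : Orthonormal 𝕜 (B ∘ u)) (hAB : ∀ m, A (u m) = -B (u (m + 1))) :
    2 ≤ ‖A - B‖ := by
  refine two_le_of_forall_four_mul_add_two_le (fun N => ?_) (norm_nonneg _)
  set x := ∑ m ∈ range (N + 1), u m
  have hx : ‖x‖ ^ 2 = N + 1 := by simp [x, hu.norm_sum_sq]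
  have hBAx : (B - A) x = ∑ m ∈ range (N + 1), B (u m) + ∑ m ∈ Ico 1 (N + 2), B (u m) := by
    simp only [x, sub_apply, map_sum, hAB, sub_neg_eq_add, sum_add_distrib, sum_Ico_eq_sum_range]
    simp only [Nat.add_one_sub_one, add_comm]
  have hoverlap : #(range (N + 1) ∩ Ico 1 (N + 2)) = N := by
    rw [range_eq_Ico, Ico_inter_Ico]
    simp
  have hBAx_sq : ‖(B - A) x‖ ^ 2 = 4 * N + 2 := by
    have := hBu.norm_sum_add_sum_sq (range (N + 1)) (Ico 1 (N + 2))
    simp only [Function.comp_apply] at this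
    rw [hBAx, this, card_range, Nat.card_Ico, hoverlap]
    push_cast
    ring
  calc (4 * N + 2 : ℝ) = ‖(A - B) x‖ ^ 2 := by rw [← hBAx_sq, ← norm_neg, ← neg_apply, neg_sub]
    _ ≤ (‖A - B‖ * ‖x‖) ^ 2 := by gcongr; exact le_opNorm _ _
    _ = ‖A - B‖ ^ 2 * (N + 1) := by rw [mul_pow, hx]

section WeightedShift

variable {𝕜 S : Type*} [RCLike 𝕜]

theorem lp.orthonormal_single {ι : Type*} [DecidableEq S] {p : ι → S}
    (hp : Function.Injective p) {c : ι → 𝕜} (hc : ∀ i, ‖c i‖ = 1) :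
    Orthonormal 𝕜 (fun i => (lp.single 2 (p i) (c i) : lp (fun _ : S => 𝕜) 2)) := by
  refine ⟨fun i => by rw [lp.norm_single (p := 2) two_pos, hc], fun i j hij => ?_⟩
  dsimp only
  rw [lp.inner_single_left, lp.single_apply_ne 2 _ _ (hp.ne hij), inner_zero_right]

variable [AddCommGroup S]

def IsWeightedShift (T : lp (fun _ : S => 𝕜) 2 →L[𝕜] lp (fun _ : S => 𝕜) 2) (e : S → 𝕜)
    (φ : S) : Prop :=
  ∀ a ψ, (T a : S → 𝕜) ψ = e ψ * (a : S → 𝕜) (ψ + φ)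

namespace IsWeightedShift

variable {T T' : lp (fun _ : S => 𝕜) 2 →L[𝕜] lp (fun _ : S => 𝕜) 2} {e e' : S → 𝕜} {φ φ' : S}

theorem apply (hT : IsWeightedShift T e φ) (a : lp (fun _ : S => 𝕜) 2) (ψ : S) :
    (T a : S → 𝕜) ψ = e ψ * (a : S → 𝕜) (ψ + φ) :=
  hT a ψ

theorem norm_map (hT : IsWeightedShift T e φ) (he : ∀ ψ, ‖e ψ‖ = 1)
    (a : lp (fun _ : S => 𝕜) 2) : ‖T a‖ = ‖a‖ := by
  have h2 : 0 < (2 : ENNReal).toReal := by norm_num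
  rw [lp.norm_eq_tsum_rpow h2, lp.norm_eq_tsum_rpow h2]
  simp_rw [hT.apply, norm_mul, he, one_mul]
  congr 1
  exact (Equiv.addRight φ).tsum_eq fun ψ => ‖(a : S → 𝕜) ψ‖ ^ (2 : ENNReal).toReal

variable [DecidableEq S]

theorem map_single (hT : IsWeightedShift T e φ) (χ : S) (v : 𝕜) :
    T (lp.single 2 χ v) = lp.single 2 (χ - φ) (e (χ - φ) * v) := by
  ext ψ
  simp only [hT.apply, lp.single_apply, Pi.single_apply, eq_sub_iff_add_eq]
  split_ifs with h
  · rw [← h, add_sub_cancel_right]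
  · rw [mul_zero]

theorem two_le_norm_sub (hT : IsWeightedShift T e φ) (hT' : IsWeightedShift T' e' φ')
    (he : ∀ ψ, ‖e ψ‖ = 1) (he' : ∀ ψ, ‖e' ψ‖ = 1) (hφ : ¬IsOfFinAddOrder (φ' - φ)) :
    2 ≤ ‖T - T'‖ := by
  set δ := φ' - φ
  have hδ : Function.Injective (fun n : ℕ => n • δ) :=
    injective_nsmul_iff_not_isOfFinAddOrder.mpr hφ
  set c : ℕ → 𝕜 := fun m => ∏ k ∈ range m, -(e (k • δ - φ) / e' (k • δ - φ))
  have hc : ∀ m, ‖c m‖ = 1 := by simp [c, norm_prod, he, he']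
  set u : ℕ → lp (fun _ : S => 𝕜) 2 := fun m => lp.single 2 (m • δ) (c m)
  have hT'u : T' ∘ u = fun m => lp.single 2 (m • δ - φ') (e' (m • δ - φ') * c m) :=
    funext fun m => hT'.map_single _ _
  refine T.two_le_norm_sub_of_orthonormal T' (lp.orthonormal_single hδ hc) ?_ fun m => ?_
  · rw [hT'u]
    exact lp.orthonormal_single ((sub_left_injective).comp hδ)
      (fun m => by rw [norm_mul, he', hc, one_mul])
  · have hpos : (m + 1) • δ - φ' = m • δ - φ := by
      rw [succ_nsmul, add_sub_assoc, sub_sub_cancel_left, ← sub_eq_add_neg]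
    have hne : e' (m • δ - φ) ≠ 0 := norm_ne_zero_iff.mp (by rw [he']; exact one_ne_zero)
    simp only [hT.map_single, hT'.map_single, hpos, ← lp.single_neg, c, prod_range_succ]
    congr 1
    field_simp

end IsWeightedShift

end WeightedShift

theorem weyl_generators_distance_two_general {S : Type*} [AddCommGroup S] [Module ℝ S]
    [DecidableEq S]
    (σ : S →ₗ[ℝ] S →ₗ[ℝ] ℝ)
    (W : S → (lp (fun _ : S => ℂ) 2 →L[ℂ] lp (fun _ : S => ℂ) 2))
    (hW : ∀ (φ' : S) (a : lp (fun _ : S => ℂ) 2) (φ : S),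
      (W φ' a : ∀ _ : S, ℂ) φ =
        Complex.exp (-(Complex.I * (σ φ' φ)) / 2) * (a : ∀ _ : S, ℂ) (φ + φ'))
    (Ω : lp (fun _ : S => ℂ) 2)
    (hΩ : ∀ φ : S, (Ω : ∀ _ : S, ℂ) φ = if φ = 0 then 1 else 0) :
    ∀ φ φ' : S, φ ≠ φ' →
      (inner ℂ (W φ Ω) (W φ' Ω) : ℂ) = 0 ∧
      ‖W φ Ω‖ = 1 ∧ ‖W φ' Ω‖ = 1 ∧
      ‖W φ - W φ'‖ = 2 := by
  intro φ φ' hne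
  set e : S → S → ℂ := fun χ ψ => Complex.exp (-(Complex.I * (σ χ ψ)) / 2)
  have hWe : ∀ χ, IsWeightedShift (W χ) (e χ) χ := hW
  have he : ∀ χ ψ, ‖e χ ψ‖ = 1 := fun χ ψ => by simp [e, Complex.norm_exp]
  have hΩ_single : Ω = lp.single 2 0 1 := by
    ext ψ
    rw [hΩ, lp.single_apply, Pi.single_apply]
  have hWΩ : Orthonormal ℂ (fun χ => W χ Ω) := by
    convert lp.orthonormal_single neg_injective (fun χ => he χ (-χ)) using 2 with χ
    rw [hΩ_single, (hWe χ).map_single, zero_sub, mul_one]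
  have hW_le : ∀ χ, ‖W χ‖ ≤ 1 := fun χ =>
    ContinuousLinearMap.opNorm_le_bound _ zero_le_one fun a => by
      rw [(hWe χ).norm_map (he χ), one_mul]
  have : IsAddTorsionFree S := .of_isTorsionFree ℝ S
  refine ⟨hWΩ.2 hne, hWΩ.1 φ, hWΩ.1 φ', le_antisymm ?_ ?_⟩
  · linarith [norm_sub_le (W φ) (W φ'), hW_le φ, hW_le φ']
  · exact (hWe φ).two_le_norm_sub (hWe φ') (he φ) (he φ')
      (not_isOfFinAddOrder_of_isAddTorsionFree (sub_ne_zero.mpr hne.symm))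

/-- In the concrete Weyl representation on ℓ²(S), with Ω the indicator sequence of
0 ∈ S: for φ ≠ φ', W(φ)Ω and W(φ')Ω are orthogonal unit vectors and
‖W(φ) − W(φ')‖ = 2. -/
theorem weyl_generators_distance_two {S : Type*} [AddCommGroup S] [Module ℝ S]
    [DecidableEq S]
    (σ : S →ₗ[ℝ] S →ₗ[ℝ] ℝ)
    (hσ_alt : ∀ φ : S, σ φ φ = 0)
    (hσ_anti : ∀ φ φ' : S, σ φ φ' = -σ φ' φ)
    (W : S → (lp (fun _ : S => ℂ) 2 →L[ℂ] lp (fun _ : S => ℂ) 2))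
    (hW : ∀ (φ' : S) (a : lp (fun _ : S => ℂ) 2) (φ : S),
      (W φ' a : ∀ _ : S, ℂ) φ =
        Complex.exp (-(Complex.I * (σ φ' φ)) / 2) * (a : ∀ _ : S, ℂ) (φ + φ'))
    (Ω : lp (fun _ : S => ℂ) 2)
    (hΩ : ∀ φ : S, (Ω : ∀ _ : S, ℂ) φ = if φ = 0 then 1 else 0) :
    ∀ φ φ' : S, φ ≠ φ' →
      (inner ℂ (W φ Ω) (W φ' Ω) : ℂ) = 0 ∧
      ‖W φ Ω‖ = 1 ∧ ‖W φ' Ω‖ = 1 ∧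
      ‖W φ - W φ'‖ = 2 :=
  weyl_generators_distance_two_general σ W hW Ω hΩ
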